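/- Let n : ℕ, let a : Fin n → ℕ satisfy 0 < a i for every i and be injective, and let M : Finset ℕ satisfy M.card < n and (∑ i, a i) ∉ M. Then there exists a permutation σ of Fin n such that for every k : Fin n, the partial sum PS a σ k = ∑_{j ∈ Finset.Iic k} a (σ j) does not belong to M. -/

import Mathlib

/-!
Induction on the number of jumps. Let `g` be the longest jump, `t` the sum of the others and `d`
the largest forbidden point. If `t ∉ M \ {d}`, order the other jumps so as to avoid `M \ {d}` and
append `g`; should a landing hit `d`, make `g` just before the jump that lands there instead: since
`g` is longer, every later landing lies beyond `d = max M`. Otherwise `t` is a forbidden point below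
`d`, and counting gives another jump `β` with `t - β` and `t + g - β` both allowed. The remaining
jumps are ordered to avoid the forbidden points below their sum `t - β`, followed by `g` and `β`.
-/

/-- Partial sum: the landing position after the jumps in positions `0, …, k`. -/
def PS {n : ℕ} (a : Fin n → ℕ) (σ : Equiv.Perm (Fin n)) (k : Fin n) : ℕ :=
  ∑ j ∈ Finset.Iic k, a (σ j)

namespace List

variable {α : Type*}

def prefixSums [AddMonoid α] : List α → List α
  | [] => []
  | x :: l => x :: (prefixSums l).map (x + ·)

@[simp] lemma prefixSums_nil [AddMonoid α] : prefixSums ([] : List α) = [] := rfl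

@[simp] lemma prefixSums_cons [AddMonoid α] (x : α) (l : List α) :
    prefixSums (x :: l) = x :: (prefixSums l).map (x + ·) := rfl

lemma prefixSums_append [AddMonoid α] (l r : List α) :
    prefixSums (l ++ r) = prefixSums l ++ (prefixSums r).map (l.sum + ·) := by
  induction l with
  | nil => simp
  | cons x l ih => simp [ih, Function.comp_def, add_assoc]

lemma prefixSums_append_singleton [AddMonoid α] (l : List α) (x : α) :
    prefixSums (l ++ [x]) = prefixSums l ++ [l.sum + x] := by
  simp [prefixSums_append]

lemma le_sum_of_mem_prefixSums [AddCommMonoid α] [PartialOrder α] [CanonicallyOrderedAdd α]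
    {l : List α} {p : α} (h : p ∈ prefixSums l) : p ≤ l.sum := by
  induction l generalizing p with
  | nil => simp at h
  | cons x l ih =>
    obtain rfl | ⟨q, hq, rfl⟩ : p = x ∨ ∃ q ∈ prefixSums l, x + q = p := by simpa using h
    · exact le_self_add
    · simpa using add_le_add_right (ih hq) x

lemma le_of_mem_prefixSums_cons [AddCommMonoid α] [PartialOrder α] [CanonicallyOrderedAdd α]
    {x p : α} {l : List α} (h : p ∈ prefixSums (x :: l)) : x ≤ p := by
  obtain rfl | ⟨q, -, rfl⟩ : p = x ∨ ∃ q ∈ prefixSums l, x + q = p := by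
    simpa only [prefixSums_cons, mem_cons, mem_map] using h
  · exact le_rfl
  · exact le_self_add

lemma exists_eq_append_cons_of_mem_prefixSums [AddMonoid α] {l : List α} {p : α}
    (h : p ∈ prefixSums l) : ∃ l₁ x l₂, l = l₁ ++ x :: l₂ ∧ p = l₁.sum + x := by
  induction l generalizing p with
  | nil => simp at h
  | cons y l ih =>
    obtain rfl | ⟨q, hq, rfl⟩ : p = y ∨ ∃ q ∈ prefixSums l, y + q = p := by simpa using h
    · exact ⟨[], p, l, by simp⟩
    · obtain ⟨l₁, x, l₂, rfl, rfl⟩ := ih hq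
      exact ⟨y :: l₁, x, l₂, by simp [add_assoc]⟩

lemma sum_take_succ_mem_prefixSums [AddMonoid α] {l : List α} {k : ℕ} (h : k < l.length) :
    (l.take (k + 1)).sum ∈ prefixSums l := by
  induction l generalizing k with
  | nil => simp at h
  | cons x l ih =>
    cases k with
    | zero => simp
    | succ k => simpa using Or.inr ⟨_, ih (by simpa using h), rfl⟩

lemma coe_eq_val_of_perm_cons [DecidableEq α] {s : Finset α} {g : α} {r l : List α}
    (hg : g ∈ s) (hr : (r : Multiset α) = (s.erase g).val) (hl : l.Perm (g :: r)) :
    (l : Multiset α) = s.val := by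
  rw [Multiset.coe_eq_coe.mpr hl, ← Multiset.cons_coe, hr, Finset.erase_val,
    Multiset.cons_erase hg]

lemma sum_eq_of_coe_eq_val [AddCommMonoid α] {s : Finset α} {l : List α}
    (h : (l : Multiset α) = s.val) : l.sum = ∑ x ∈ s, x := by
  rw [← Multiset.sum_coe, h, Finset.sum_val]; rfl

lemma Perm.exists_ofFn_comp_eq {n : ℕ} {a : Fin n → α} (ha : Function.Injective a)
    {l : List α} (h : l.Perm (ofFn a)) : ∃ σ : Equiv.Perm (Fin n), ofFn (a ∘ σ) = l := by
  obtain rfl : n = l.length := by simpa using h.length_eq.symm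
  have hmem (j : Fin l.length) : ∃ i, a i = l.get j := mem_ofFn.mp (h.subset (l.get_mem j))
  choose f hf using hmem
  have hf_inj : Function.Injective f := fun i j hij =>
    nodup_iff_injective_get.mp (h.nodup_iff.mpr (nodup_ofFn.mpr ha))
      (by rw [← hf, ← hf, hij])
  refine ⟨Equiv.ofBijective f (Finite.injective_iff_bijective.mp hf_inj), ?_⟩
  change ofFn (a ∘ f) = l
  rw [show a ∘ f = l.get from funext hf, ofFn_get]

end List

namespace Grasshopper

open Finset List

def Avoids (M : Finset ℕ) (l : List ℕ) : Prop :=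
  ∀ p ∈ l.prefixSums, p ∉ M

lemma avoids_append_singleton {M : Finset ℕ} {l : List ℕ} {x : ℕ} :
    Avoids M (l ++ [x]) ↔ Avoids M l ∧ l.sum + x ∉ M := by
  simp [Avoids, prefixSums_append_singleton, or_imp, forall_and]

lemma Avoids.of_erase {M : Finset ℕ} {l : List ℕ} {d : ℕ} (h : Avoids (M.erase d) l)
    (hd : d ∉ l.prefixSums) : Avoids M l :=
  fun p hp hpM => h p hp (mem_erase.mpr ⟨fun hpd => hd (hpd ▸ hp), hpM⟩)

lemma Avoids.of_filter_lt_sum {M : Finset ℕ} {l : List ℕ} (h : Avoids (M.filter (· < l.sum)) l)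
    (hl : l.sum ∉ M) : Avoids M l := by
  intro p hp hpM
  rcases (le_sum_of_mem_prefixSums hp).lt_or_eq with hlt | rfl
  · exact h p hp (mem_filter.mpr ⟨hpM, hlt⟩)
  · exact hl hpM

lemma avoids_append_cons_cons {M : Finset ℕ} {l₁ l₂ : List ℕ} {e g : ℕ}
    (h : Avoids (M.erase (l₁.sum + e)) (l₁ ++ e :: l₂)) (hM : ∀ m ∈ M, m ≤ l₁.sum + e)
    (he : 0 < e) (heg : e < g) : Avoids M (l₁ ++ g :: e :: l₂) := by
  intro p hp hpM
  rw [prefixSums_append, mem_append] at hp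
  rcases hp with hp | hp
  · have hp' : p ∈ (l₁ ++ e :: l₂).prefixSums := by
      rw [prefixSums_append]; exact mem_append_left _ hp
    have := le_sum_of_mem_prefixSums hp
    exact h p hp' (mem_erase.mpr ⟨by omega, hpM⟩)
  · obtain ⟨q, hq, rfl⟩ := mem_map.mp hp
    have := le_of_mem_prefixSums_cons hq
    have := hM _ hpM
    omega

lemma exists_add_sub_notMem_and_sub_notMem {C M : Finset ℕ} {t g : ℕ} (htM : t ∈ M)
    (hcard : M.card ≤ C.card) (hpos : ∀ c ∈ C, 0 < c) (hle : ∀ c ∈ C, c ≤ t)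
    (hlt : ∀ c ∈ C, c < g) : ∃ c ∈ C, t + g - c ∉ M ∧ t - c ∉ M := by
  by_contra! hbad
  -- Otherwise one of `t + g - c > t` and `t - c < t` is a forbidden point for every `c`, and this
  -- choice injects `C` into `M.erase t`.
  have hinj : C.card ≤ (M.erase t).card := by
    refine card_le_card_of_injOn (fun c => if t + g - c ∈ M then t + g - c else t - c) ?_ ?_
    · intro c hc
      have := hpos c hc; have := hle c hc; have := hlt c hc
      dsimp only
      split_ifs with h
      · exact mem_erase.mpr ⟨by omega, h⟩
      · exact mem_erase.mpr ⟨by omega, hbad c hc h⟩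
    · intro c hc c' hc' hcc'
      have := hle c hc; have := hlt c hc; have := hle c' hc'; have := hlt c' hc'
      dsimp only at hcc'
      split_ifs at hcc' <;> omega
  rw [card_erase_of_mem htM] at hinj
  have := card_pos.mpr ⟨t, htM⟩
  omega

lemma card_filter_lt_add_two_le {M : Finset ℕ} {u x y : ℕ} (hx : x ∈ M) (hy : y ∈ M)
    (hxy : x ≠ y) (hux : u ≤ x) (huy : u ≤ y) : (M.filter (· < u)).card + 2 ≤ M.card := by
  have h2 : 1 < (M.filter fun m => ¬m < u).card :=
    one_lt_card.mpr ⟨x, by simp [hx, hux], y, by simp [hy, huy], hxy⟩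
  have := card_filter_add_card_filter_not (s := M) (· < u)
  omega

lemma exists_avoids_of_avoids_erase {s M : Finset ℕ} {g d : ℕ} (hg : g ∈ s)
    (hpos : ∀ x ∈ s.erase g, 0 < x) (hlt : ∀ x ∈ s.erase g, x < g) (hdmax : ∀ m ∈ M, m ≤ d)
    (hsum : ∑ x ∈ s, x ∉ M) {r : List ℕ} (hr : (r : Multiset ℕ) = (s.erase g).val)
    (hav : Avoids (M.erase d) r) : ∃ l : List ℕ, (l : Multiset ℕ) = s.val ∧ Avoids M l := by
  by_cases hd : d ∈ r.prefixSums
  · obtain ⟨r₁, e, r₂, rfl, rfl⟩ := exists_eq_append_cons_of_mem_prefixSums hd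
    have he : e ∈ s.erase g := by rw [← mem_val, ← hr]; simp
    exact ⟨r₁ ++ g :: e :: r₂, coe_eq_val_of_perm_cons hg hr perm_middle,
      avoids_append_cons_cons hav hdmax (hpos e he) (hlt e he)⟩
  · refine ⟨r ++ [g], coe_eq_val_of_perm_cons hg hr (perm_append_singleton _ _), ?_⟩
    rw [avoids_append_singleton, sum_eq_of_coe_eq_val hr, sum_erase_add _ _ hg]
    exact ⟨hav.of_erase hd, hsum⟩

lemma exists_avoids_of_avoids_filter_lt {s M : Finset ℕ} {g β : ℕ} (hg : g ∈ s) (hβ : β ∈ s.erase g)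
    (hsum : ∑ x ∈ s, x ∉ M) (hβS : ∑ x ∈ s, x - β ∉ M) (hβt : ∑ x ∈ s.erase g, x - β ∉ M)
    {r : List ℕ} (hr : (r : Multiset ℕ) = ((s.erase g).erase β).val)
    (hav : Avoids (M.filter (· < ∑ x ∈ (s.erase g).erase β, x)) r) :
    ∃ l : List ℕ, (l : Multiset ℕ) = s.val ∧ Avoids M l := by
  have ht := sum_erase_add _ (fun x => x) hβ
  have hS := sum_erase_add _ (fun x => x) hg
  rw [← sum_eq_of_coe_eq_val hr] at hav ht
  refine ⟨r ++ [g, β], coe_eq_val_of_perm_cons hg (coe_eq_val_of_perm_cons hβ hr (.refl _))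
    perm_append_comm, ?_⟩
  rw [show r ++ [g, β] = r ++ [g] ++ [β] by simp, avoids_append_singleton,
    avoids_append_singleton, List.sum_append, List.sum_singleton]
  refine ⟨⟨hav.of_filter_lt_sum (by rwa [← ht, Nat.add_sub_cancel] at hβt), ?_⟩, ?_⟩
  · rwa [← hS, ← ht, show r.sum + β + g - β = r.sum + g by omega] at hβS
  · rwa [← hS, ← ht, show r.sum + β + g = r.sum + g + β by ring] at hsum

theorem exists_avoids (s M : Finset ℕ) (hpos : ∀ x ∈ s, 0 < x) (hcard : M.card < s.card)
    (hsum : ∑ x ∈ s, x ∉ M) : ∃ l : List ℕ, (l : Multiset ℕ) = s.val ∧ Avoids M l := by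
  induction s using Finset.strongInduction generalizing M with
  | H s ih =>
  obtain rfl | hMne := M.eq_empty_or_nonempty
  · exact ⟨s.toList, s.coe_toList, fun _ _ => notMem_empty _⟩
  have hsne : s.Nonempty := card_pos.mp (by omega)
  obtain ⟨g, hg, hgmax⟩ : ∃ g ∈ s, ∀ x ∈ s, x ≤ g := ⟨s.max' hsne, s.max'_mem _, s.le_max'⟩
  obtain ⟨d, hdM, hdmax⟩ : ∃ d ∈ M, ∀ m ∈ M, m ≤ d := ⟨M.max' hMne, M.max'_mem _, M.le_max'⟩
  have hCpos : ∀ c ∈ s.erase g, 0 < c := fun c hc => hpos c (mem_of_mem_erase hc)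
  have hClt : ∀ c ∈ s.erase g, c < g := fun c hc =>
    (hgmax c (mem_of_mem_erase hc)).lt_of_ne (ne_of_mem_erase hc)
  have hCcard : (s.erase g).card + 1 = s.card := card_erase_add_one hg
  by_cases ht : ∑ x ∈ s.erase g, x ∈ M.erase d
  · obtain ⟨htd, htM⟩ := mem_erase.mp ht
    obtain ⟨β, hβ, hβS, hβt⟩ := exists_add_sub_notMem_and_sub_notMem htM (by omega) hCpos
      (fun c hc => single_le_sum (f := fun x => x) (fun _ _ => Nat.zero_le _) hc) hClt
    have hu : ∑ x ∈ (s.erase g).erase β, x ≤ ∑ x ∈ s.erase g, x :=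
      sum_le_sum_of_subset (erase_subset _ _)
    obtain ⟨r, hr, hav⟩ := ih ((s.erase g).erase β) ((erase_ssubset hβ).trans (erase_ssubset hg))
      (M.filter (· < ∑ x ∈ (s.erase g).erase β, x)) (fun x hx => hCpos x (mem_of_mem_erase hx))
      (by
        have := card_filter_lt_add_two_le htM hdM htd hu (hu.trans (hdmax _ htM))
        have := card_erase_add_one hβ
        omega)
      (fun h => (mem_filter.mp h).2.false)
    exact exists_avoids_of_avoids_filter_lt hg hβ hsum (by rwa [← sum_erase_add _ _ hg]) hβt hr hav
  · obtain ⟨r, hr, hav⟩ := ih (s.erase g) (erase_ssubset hg) (M.erase d) hCpos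
      (by have := card_pos.mpr hMne; rw [card_erase_of_mem hdM]; omega) ht
    exact exists_avoids_of_avoids_erase hg hCpos hClt hdmax hsum hr hav

lemma PS_eq_sum_take {n : ℕ} (a : Fin n → ℕ) (σ : Equiv.Perm (Fin n)) (k : Fin n) :
    PS a σ k = ((List.ofFn (a ∘ σ)).take ((k : ℕ) + 1)).sum := by
  rw [List.sum_take_ofFn, PS]
  congr 1
  exact Finset.ext fun j => by simp

end Grasshopper

/-- Generalised Grasshopper problem: the forbidden set `M` is only required to
have cardinality less than `n`, and may contain `0`. -/
theorem grasshopper (n : ℕ) (a : Fin n → ℕ) (M : Finset ℕ)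
    (ha_pos : ∀ i, 0 < a i) (ha_inj : Function.Injective a)
    (hM_card : M.card < n) (hS : (∑ i, a i) ∉ M) :
    ∃ σ : Equiv.Perm (Fin n), ∀ k : Fin n, PS a σ k ∉ M := by
  let a' : Fin n ↪ ℕ := ⟨a, ha_inj⟩
  obtain ⟨l, hl, hav⟩ := Grasshopper.exists_avoids (Finset.univ.map a') M
    (by simpa [a'] using ha_pos) (by simpa using hM_card) (by simpa [a'] using hS)
  have hperm : l.Perm (List.ofFn a) := by
    rw [← Multiset.coe_eq_coe, hl, Finset.map_val, Fin.univ_val_map]; rfl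
  obtain ⟨σ, hσ⟩ := hperm.exists_ofFn_comp_eq ha_inj
  refine ⟨σ, fun k => ?_⟩
  rw [Grasshopper.PS_eq_sum_take, hσ]
  exact hav _ (List.sum_take_succ_mem_prefixSums (by simp [← hσ]))
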